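/- Let F̄(x) = (1/2)‖Āx − b̄‖² + τ‖x‖₁ with τ > 0 and minimizer x*. If a point x satisfies τ‖x‖₁ ≤ F̄(x) and ‖v(x)‖_∞ ≤ ε, where v(x) is the minimum-norm subgradient, then F̄(x) − F̄* ≤ 2τ⁻¹ F̄(x) ε. In particular, with ε = τδ/(2F̄(x⁰)) and F̄(x) ≤ F̄(x⁰), one gets F̄(x) − F̄* ≤ δ. -/
import Mathlib


open Matrix

/-- `F̄(x) = (1/2)‖Āx − b̄‖² + τ‖x‖₁`. -/
noncomputable def lsObj {m n : ℕ} (Ab : Matrix (Fin m) (Fin n) ℝ) (bb : Fin m → ℝ)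
    (τ : ℝ) (x : Fin n → ℝ) : ℝ :=
  (1 / 2) * ((Ab.mulVec x - bb) ⬝ᵥ (Ab.mulVec x - bb)) + τ * ∑ i, |x i|

/-- `∇((1/2)‖Āx − b̄‖²) = Āᵀ(Āx − b̄)`. -/
noncomputable def lsGrad {m n : ℕ} (Ab : Matrix (Fin m) (Fin n) ℝ) (bb : Fin m → ℝ)
    (x : Fin n → ℝ) : Fin n → ℝ :=
  Abᵀ.mulVec (Ab.mulVec x - bb)

/-- The minimum-norm subgradient of `F̄`, given componentwise. -/
noncomputable def lsMinSubgrad {m n : ℕ} (Ab : Matrix (Fin m) (Fin n) ℝ) (bb : Fin m → ℝ)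
    (τ : ℝ) (x : Fin n → ℝ) : Fin n → ℝ := fun i =>
  if x i ≠ 0 then lsGrad Ab bb x i + τ * Real.sign (x i)
  else min (lsGrad Ab bb x i + τ) (max 0 (lsGrad Ab bb x i - τ))


private lemma sign_abs_le (t : ℝ) : |Real.sign t| ≤ 1 := by
  rcases lt_trichotomy t 0 with h | h | h
  · rw [Real.sign_of_neg h]; norm_num
  · rw [h, Real.sign_zero]; norm_num
  · rw [Real.sign_of_pos h]; norm_num

private lemma lsObj_nonneg {m n : ℕ} (Ab : Matrix (Fin m) (Fin n) ℝ) (bb : Fin m → ℝ)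
    {τ : ℝ} (hτ : 0 ≤ τ) (x : Fin n → ℝ) : 0 ≤ lsObj Ab bb τ x := by
  unfold lsObj
  have h1 : 0 ≤ (Ab.mulVec x - bb) ⬝ᵥ (Ab.mulVec x - bb) :=
    Finset.sum_nonneg fun i _ => mul_self_nonneg _
  have h2 : (0:ℝ) ≤ ∑ i, |x i| := Finset.sum_nonneg fun i _ => abs_nonneg _
  positivity

private lemma lsObj_l1_le {m n : ℕ} (Ab : Matrix (Fin m) (Fin n) ℝ) (bb : Fin m → ℝ)
    (τ : ℝ) (x : Fin n → ℝ) : τ * ∑ i, |x i| ≤ lsObj Ab bb τ x := by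
  unfold lsObj
  have h1 : 0 ≤ (Ab.mulVec x - bb) ⬝ᵥ (Ab.mulVec x - bb) :=
    Finset.sum_nonneg fun i _ => mul_self_nonneg _
  linarith

/-- `v(x)` is a subgradient: `F̄(x) + ⟨v(x), y - x⟩ ≤ F̄(y)`. -/
private lemma subgrad_ineq {m n : ℕ} (Ab : Matrix (Fin m) (Fin n) ℝ) (bb : Fin m → ℝ)
    {τ : ℝ} (hτ : 0 < τ) (x y : Fin n → ℝ) :
    lsObj Ab bb τ x + ∑ i, lsMinSubgrad Ab bb τ x i * (y i - x i) ≤ lsObj Ab bb τ y := by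
  set u := Ab.mulVec x - bb with hu
  set d : Fin n → ℝ := y - x with hd
  set w := Ab.mulVec d with hw
  have hyu : Ab.mulVec y - bb = u + w := by
    rw [hu, hw, hd, Matrix.mulVec_sub]; ring_nf
  -- quadratic part
  have hgd : lsGrad Ab bb x ⬝ᵥ d = u ⬝ᵥ w := by
    rw [lsGrad, Matrix.mulVec_transpose, ← Matrix.dotProduct_mulVec]
  have hquad : (1/2) * (u ⬝ᵥ u) + lsGrad Ab bb x ⬝ᵥ d
      ≤ (1/2) * ((Ab.mulVec y - bb) ⬝ᵥ (Ab.mulVec y - bb)) := by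
    rw [hyu, hgd]
    have hexp : (u + w) ⬝ᵥ (u + w) = u ⬝ᵥ u + 2 * (u ⬝ᵥ w) + w ⬝ᵥ w := by
      simp [add_dotProduct, dotProduct_add, dotProduct_comm w u]; ring
    have hww : 0 ≤ w ⬝ᵥ w := Finset.sum_nonneg fun i _ => mul_self_nonneg _
    rw [hexp]; linarith
  -- l1 part, componentwise
  have hl1 : ∀ i, (lsMinSubgrad Ab bb τ x i - lsGrad Ab bb x i) * (y i - x i)
      ≤ τ * |y i| - τ * |x i| := by
    intro i
    set g := lsGrad Ab bb x i with hg
    by_cases hx : x i ≠ 0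
    · have hvi : lsMinSubgrad Ab bb τ x i = g + τ * Real.sign (x i) := by
        rw [lsMinSubgrad]; simp [hx, hg]
      rw [hvi]
      have hsx : τ * Real.sign (x i) * x i = τ * |x i| := by
        rcases hx.lt_or_gt with h | h
        · rw [Real.sign_of_neg h, abs_of_neg h]; ring
        · rw [Real.sign_of_pos h, abs_of_pos h]; ring
      have hsy : τ * Real.sign (x i) * y i ≤ τ * |y i| := by
        calc τ * Real.sign (x i) * y i ≤ |τ * Real.sign (x i) * y i| := le_abs_self _
          _ = τ * |Real.sign (x i)| * |y i| := by
              rw [abs_mul, abs_mul, abs_of_pos hτ]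
          _ ≤ τ * 1 * |y i| := by
              have := sign_abs_le (x i)
              have : τ * |Real.sign (x i)| ≤ τ * 1 :=
                mul_le_mul_of_nonneg_left this hτ.le
              exact mul_le_mul_of_nonneg_right this (abs_nonneg _)
          _ = τ * |y i| := by ring
      nlinarith [hsx, hsy]
    · push_neg at hx
      have hvi : lsMinSubgrad Ab bb τ x i = min (g + τ) (max 0 (g - τ)) := by
        rw [lsMinSubgrad]; simp [hx, hg]
      set v := lsMinSubgrad Ab bb τ x i with hvdef
      have h1 : v ≤ g + τ := by rw [hvi]; exact min_le_left _ _
      have h2 : g - τ ≤ v := by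
        rw [hvi]
        exact le_min (by linarith) (le_max_right _ _)
      have hs : |v - g| ≤ τ := abs_le.mpr ⟨by linarith, by linarith⟩
      have : (v - g) * (y i - x i) = (v - g) * y i := by rw [hx]; ring
      rw [this, hx, abs_zero]
      have : (v - g) * y i ≤ |v - g| * |y i| := by
        calc (v - g) * y i ≤ |(v - g) * y i| := le_abs_self _
          _ = |v - g| * |y i| := abs_mul _ _
      have h3 : |v - g| * |y i| ≤ τ * |y i| :=
        mul_le_mul_of_nonneg_right hs (abs_nonneg _)
      linarith
  -- combine
  have hsum : ∑ i, (lsMinSubgrad Ab bb τ x i - lsGrad Ab bb x i) * (y i - x i)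
      ≤ ∑ i, (τ * |y i| - τ * |x i|) :=
    Finset.sum_le_sum fun i _ => hl1 i
  have hdot : lsGrad Ab bb x ⬝ᵥ d = ∑ i, lsGrad Ab bb x i * (y i - x i) := by
    simp [dotProduct, hd]
  unfold lsObj
  rw [← hu]
  have expand : ∑ i, lsMinSubgrad Ab bb τ x i * (y i - x i)
      = (∑ i, (lsMinSubgrad Ab bb τ x i - lsGrad Ab bb x i) * (y i - x i))
        + lsGrad Ab bb x ⬝ᵥ d := by
    rw [hdot, ← Finset.sum_add_distrib]
    congr 1; ext i; ring
  have hsum2 : ∑ i, (lsMinSubgrad Ab bb τ x i - lsGrad Ab bb x i) * (y i - x i)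
      ≤ τ * ∑ i, |y i| - τ * ∑ i, |x i| := by
    calc _ ≤ ∑ i, (τ * |y i| - τ * |x i|) := hsum
      _ = _ := by rw [Finset.sum_sub_distrib, Finset.mul_sum, Finset.mul_sum]
  linarith [hquad, hsum2, expand]

/-- if `τ‖x‖₁ ≤ F̄(x)` and `‖v(x)‖_∞ ≤ ε` then
`F̄(x) − F̄* ≤ 2τ⁻¹ F̄(x) ε`; in particular, with `ε = τδ/(2F̄(x⁰))` and
`F̄(x) ≤ F̄(x⁰)`, `F̄(x) − F̄* ≤ δ`. -/
theorem stmt15 {m n : ℕ} (Ab : Matrix (Fin m) (Fin n) ℝ) (bb : Fin m → ℝ) (τ : ℝ)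
    (hτ : 0 < τ) (xstar : Fin n → ℝ)
    (hopt : ∀ y, lsObj Ab bb τ xstar ≤ lsObj Ab bb τ y)
    (x : Fin n → ℝ) (ε : ℝ)
    (hl1 : τ * ∑ i, |x i| ≤ lsObj Ab bb τ x)
    (hv : (⨆ i, |lsMinSubgrad Ab bb τ x i|) ≤ ε) :
    lsObj Ab bb τ x - lsObj Ab bb τ xstar ≤ 2 * τ⁻¹ * lsObj Ab bb τ x * ε ∧
    (∀ δ : ℝ, 0 ≤ δ → ∀ x0 : Fin n → ℝ,
      ε = τ * δ / (2 * lsObj Ab bb τ x0) →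
      lsObj Ab bb τ x ≤ lsObj Ab bb τ x0 →
      lsObj Ab bb τ x - lsObj Ab bb τ xstar ≤ δ) := by
  have hε0 : 0 ≤ ε := le_trans (Real.iSup_nonneg fun i => abs_nonneg _) hv
  have hvle : ∀ i, |lsMinSubgrad Ab bb τ x i| ≤ ε := fun i =>
    le_trans (le_ciSup (f := fun j => |lsMinSubgrad Ab bb τ x j|)
      (Set.finite_range _).bddAbove i) hv
  have hsub := subgrad_ineq Ab bb hτ x xstar
  have key : lsObj Ab bb τ x - lsObj Ab bb τ xstar
      ≤ ε * (∑ i, |x i| + ∑ i, |xstar i|) := by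
    have h1 : lsObj Ab bb τ x - lsObj Ab bb τ xstar
        ≤ ∑ i, lsMinSubgrad Ab bb τ x i * (x i - xstar i) := by
      have : ∑ i, lsMinSubgrad Ab bb τ x i * (xstar i - x i)
          = - ∑ i, lsMinSubgrad Ab bb τ x i * (x i - xstar i) := by
        rw [← Finset.sum_neg_distrib]; congr 1; ext i; ring
      linarith [hsub, this ▸ hsub]
    have h2 : ∑ i, lsMinSubgrad Ab bb τ x i * (x i - xstar i)
        ≤ ∑ i, ε * (|x i| + |xstar i|) := by
      apply Finset.sum_le_sum
      intro i _
      calc lsMinSubgrad Ab bb τ x i * (x i - xstar i)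
          ≤ |lsMinSubgrad Ab bb τ x i * (x i - xstar i)| := le_abs_self _
        _ = |lsMinSubgrad Ab bb τ x i| * |x i - xstar i| := abs_mul _ _
        _ ≤ ε * (|x i| + |xstar i|) := by
            apply mul_le_mul (hvle i) (abs_sub _ _) (abs_nonneg _) hε0
    calc lsObj Ab bb τ x - lsObj Ab bb τ xstar ≤ _ := h1
      _ ≤ _ := h2
      _ = ε * (∑ i, |x i| + ∑ i, |xstar i|) := by
          simp only [mul_add, Finset.mul_sum, Finset.sum_add_distrib]
  have hxstar1 : τ * ∑ i, |xstar i| ≤ lsObj Ab bb τ x :=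
    le_trans (lsObj_l1_le Ab bb τ xstar) (hopt x)
  have part1 : lsObj Ab bb τ x - lsObj Ab bb τ xstar ≤ 2 * τ⁻¹ * lsObj Ab bb τ x * ε := by
    have hbound : ∑ i, |x i| + ∑ i, |xstar i| ≤ 2 * τ⁻¹ * lsObj Ab bb τ x := by
      have h1 : ∑ i, |x i| ≤ τ⁻¹ * lsObj Ab bb τ x :=
        (le_inv_mul_iff₀ hτ).mpr hl1
      have h2 : ∑ i, |xstar i| ≤ τ⁻¹ * lsObj Ab bb τ x :=
        (le_inv_mul_iff₀ hτ).mpr hxstar1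
      linarith
    calc lsObj Ab bb τ x - lsObj Ab bb τ xstar ≤ ε * (∑ i, |x i| + ∑ i, |xstar i|) := key
      _ ≤ ε * (2 * τ⁻¹ * lsObj Ab bb τ x) := mul_le_mul_of_nonneg_left hbound hε0
      _ = 2 * τ⁻¹ * lsObj Ab bb τ x * ε := by ring
  refine ⟨part1, ?_⟩
  intro δ hδ x0 hεeq hle
  have hFx : 0 ≤ lsObj Ab bb τ x := lsObj_nonneg Ab bb hτ.le x
  have hFx0 : 0 ≤ lsObj Ab bb τ x0 := lsObj_nonneg Ab bb hτ.le x0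
  rcases eq_or_lt_of_le hFx0 with h0 | h0
  · have : ε = 0 := by rw [hεeq, ← h0]; norm_num
    rw [this] at part1
    simpa using part1.trans (by linarith [mul_nonneg (mul_nonneg (by positivity : (0:ℝ) ≤ 2 * τ⁻¹) hFx) (le_refl (0:ℝ))] : 2 * τ⁻¹ * lsObj Ab bb τ x * 0 ≤ δ)
  · have hεval : ε * (2 * lsObj Ab bb τ x0) = τ * δ := by
      rw [hεeq]; field_simp
    have hτi : τ⁻¹ * τ = 1 := inv_mul_cancel₀ hτ.ne'
    have hA : 2 * ε * lsObj Ab bb τ x ≤ τ * δ := by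
      nlinarith [hε0, hle, hεval]
    have hfinal : 2 * τ⁻¹ * lsObj Ab bb τ x * ε ≤ δ := by
      have h1 : 2 * τ⁻¹ * lsObj Ab bb τ x * ε = τ⁻¹ * (2 * ε * lsObj Ab bb τ x) := by ring
      have h2 : τ⁻¹ * (2 * ε * lsObj Ab bb τ x) ≤ τ⁻¹ * (τ * δ) :=
        mul_le_mul_of_nonneg_left hA (inv_nonneg.mpr hτ.le)
      have h3 : τ⁻¹ * (τ * δ) = δ := by rw [← mul_assoc, hτi, one_mul]
      linarith
    linarith [part1]
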